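/- Let X₁ and X₃ be independent random variables each taking values in {0,1} with P(X₁=0)=γ₁ ∈ (0,1) and P(X₃=0)=γ₃ ∈ (0,1). Let φ: {0,1}×ℝ×{0,1} → ℝ. Given the two marginalizations f_A(x₁,x₂) = γ₃φ(x₁,x₂,0) + (1−γ₃)φ(x₁,x₂,1) and f_B(x₂,x₃) = γ₁φ(0,x₂,x₃) + (1−γ₁)φ(1,x₂,x₃), for any real t there exists φ' ≠ φ with φ'(0,x₂,0) = φ(0,x₂,0) + t producing the same f_A and f_B; explicitly, setting φ'(0,x₂,1) = φ(0,x₂,1) − (γ₃/(1−γ₃))t, φ'(1,x₂,0) = φ(1,x₂,0) − (γ₁/(1−γ₁))t, and φ'(1,x₂,1) = φ(1,x₂,1) + (γ₁γ₃/((1−γ₁)(1−γ₃)))t preserves both marginalizations. -/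

import Mathlib

/-!
Both marginalizations are linear in `φ` and act on the `x₁` and `x₃` coordinates separately,
so adding `t • (w₁ ⊗ w₃)`, where `wᵢ : Bool → ℝ` has mean zero under the weights
`(γᵢ, 1 - γᵢ)`, changes neither of them. Normalizing `wᵢ false = 1` forces
`wᵢ true = -γᵢ / (1 - γᵢ)`, which gives the four explicit values.
-/

noncomputable def zeroMeanVector (γ : ℝ) : Bool → ℝ :=
  fun x => cond x (-(γ / (1 - γ))) 1

theorem zeroMeanVector_mean {γ : ℝ} (hγ : γ ≠ 1) :
    γ * zeroMeanVector γ false + (1 - γ) * zeroMeanVector γ true = 0 := by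
  have : 1 - γ ≠ 0 := sub_ne_zero.mpr hγ.symm
  simp only [zeroMeanVector, cond_false, cond_true]
  field_simp
  ring

/-- Non-identifiability with two binary variables: for γ₁, γ₃ ∈ (0,1) and any t,
perturbing φ(0,x₂,0) by t and adjusting the other three values explicitly preserves
both marginalizations f_A and f_B; for t ≠ 0 the perturbed φ' differs from φ.
Here `false` encodes the value 0 and `true` the value 1. -/
theorem stmt9 (γ₁ γ₃ : ℝ) (hγ₁ : γ₁ ∈ Set.Ioo (0 : ℝ) 1) (hγ₃ : γ₃ ∈ Set.Ioo (0 : ℝ) 1)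
    (φ : Bool → ℝ → Bool → ℝ) (t : ℝ) :
    ∃ φ' : Bool → ℝ → Bool → ℝ,
      (∀ x₂, φ' false x₂ false = φ false x₂ false + t) ∧
      (∀ x₂, φ' false x₂ true = φ false x₂ true - (γ₃ / (1 - γ₃)) * t) ∧
      (∀ x₂, φ' true x₂ false = φ true x₂ false - (γ₁ / (1 - γ₁)) * t) ∧
      (∀ x₂, φ' true x₂ true = φ true x₂ true + (γ₁ * γ₃ / ((1 - γ₁) * (1 - γ₃))) * t) ∧
      (∀ x₁ x₂, γ₃ * φ' x₁ x₂ false + (1 - γ₃) * φ' x₁ x₂ true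
        = γ₃ * φ x₁ x₂ false + (1 - γ₃) * φ x₁ x₂ true) ∧
      (∀ x₂ x₃, γ₁ * φ' false x₂ x₃ + (1 - γ₁) * φ' true x₂ x₃
        = γ₁ * φ false x₂ x₃ + (1 - γ₁) * φ true x₂ x₃) ∧
      (t ≠ 0 → φ' ≠ φ) := by
  have mean₁ := zeroMeanVector_mean hγ₁.2.ne
  have mean₃ := zeroMeanVector_mean hγ₃.2.ne
  refine ⟨fun x₁ x₂ x₃ => φ x₁ x₂ x₃ + t * zeroMeanVector γ₁ x₁ * zeroMeanVector γ₃ x₃,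
    fun _ => ?_, fun _ => ?_, fun _ => ?_, fun _ => ?_,
    fun x₁ _ => ?marginalA, fun _ x₃ => ?marginalB, fun ht hφ => ht ?perturbed⟩ <;> beta_reduce
  case marginalA => linear_combination (t * zeroMeanVector γ₁ x₁) * mean₃
  case marginalB => linear_combination (t * zeroMeanVector γ₃ x₃) * mean₁
  case perturbed => simpa [zeroMeanVector] using congrFun (congrFun (congrFun hφ false) 0) false
  all_goals simp only [zeroMeanVector, cond_false, cond_true, ← div_mul_div_comm]; ring
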